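/- arXiv:1309.1651 — 5 statements merged into one kernel-verified Lean document; each statement's English description precedes it below -/
import Mathlib

section
/- In the rank-one quantum group U(χ;α), for every r ∈ ℕ one has the commutation relations [E, F^r] = (r)_q · F^{r-1} · (−q^{−(r−1)} K_α + L_α) and [E^r, F] = (r)_q · (−q^{−(r−1)} K_α + L_α) · E^{r−1}, where q = χ(α,α). -/
/-- The `x`-integer `(k)_x = 1 + x + ⋯ + x^{k-1}`. -/
def qnum {K : Type*} [CommRing K] (x : K) (k : ℕ) : K := ∑ r ∈ Finset.range k, x ^ r

/-- The `x`-factorial `(k)_x! = ∏_{r=1}^{k} (r)_x`. -/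
def qfact {K : Type*} [CommRing K] (x : K) (k : ℕ) : K := ∏ r ∈ Finset.range k, qnum x (r + 1)

/-- `ch(x)`: the least `r ≥ 2` with `(r)_x! = 0`, or `0` if there is none. -/
noncomputable def chfn {K : Type*} [CommRing K] (x : K) : ℕ :=
  sInf {r : ℕ | 2 ≤ r ∧ qfact x r = 0}

/-- The rank-one generalized quantum group `U(χ;α)`: an associative `K`-algebra with
generators `K_λ, L_μ (λ, μ ∈ A)`, `E`, `F` and the defining relations of `U(χ;α)`
(except the nilpotency relations `E^N = F^N = 0`, which are imposed as hypotheses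
in the theorem below). -/
structure RankOneQG (K : Type*) [Field K] (A : Type*) [AddCommGroup A]
    (χ : A → A → Kˣ) (α : A) (U : Type*) [Ring U] [Algebra K U] where
  Kel : A → U
  Lel : A → U
  E : U
  F : U
  K_zero : Kel 0 = 1
  L_zero : Lel 0 = 1
  K_add : ∀ l m : A, Kel l * Kel m = Kel (l + m)
  L_add : ∀ l m : A, Lel l * Lel m = Lel (l + m)
  KL_comm : ∀ l m : A, Lel l * Kel m = Kel m * Lel l
  KE : ∀ l : A, Kel l * E = (χ l α : K) • (E * Kel l)
  KF : ∀ l : A, Kel l * F = (χ l (-α) : K) • (F * Kel l)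
  LE : ∀ m : A, Lel m * E = (χ (-α) m : K) • (E * Lel m)
  LF : ∀ m : A, Lel m * F = (χ α m : K) • (F * Lel m)
  EF : E * F - F * E = -Kel α + Lel α

/-- In `U(χ;α)`, for every `r ∈ ℕ` (with `r ≥ 1`), writing `q = χ(α,α)`:
`[E, F^r] = (r)_q F^{r-1} (−q^{−(r−1)} K_α + L_α)` and
`[E^r, F] = (r)_q (−q^{−(r−1)} K_α + L_α) E^{r−1}`. -/
theorem rankOne_commutation {K : Type*} [Field K] {A : Type*} [AddCommGroup A]
    (χ : A → A → Kˣ) (α : A)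
    (hχ1 : ∀ a b c : A, χ (a + b) c = χ a c * χ b c)
    (hχ2 : ∀ a b c : A, χ a (b + c) = χ a b * χ a c)
    (hα : ∀ n : ℕ, 0 < n → n • α ≠ 0)
    {U : Type*} [Ring U] [Algebra K U] (M : RankOneQG K A χ α U)
    (hEnil : 2 ≤ chfn ((χ α α : Kˣ) : K) → M.E ^ chfn ((χ α α : Kˣ) : K) = 0)
    (hFnil : 2 ≤ chfn ((χ α α : Kˣ) : K) → M.F ^ chfn ((χ α α : Kˣ) : K) = 0)
    (r : ℕ) (hr : 1 ≤ r) :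
    M.E * M.F ^ r - M.F ^ r * M.E =
      qnum ((χ α α : Kˣ) : K) r •
        (M.F ^ (r - 1) * ((-((((χ α α)⁻¹ : Kˣ) : K) ^ (r - 1))) • M.Kel α + M.Lel α)) ∧
    M.E ^ r * M.F - M.F * M.E ^ r =
      qnum ((χ α α : Kˣ) : K) r •
        (((-((((χ α α)⁻¹ : Kˣ) : K) ^ (r - 1))) • M.Kel α + M.Lel α) * M.E ^ (r - 1)) := by

  set q : K := ((χ α α : Kˣ) : K) with hq
  set qi : K := (((χ α α)⁻¹ : Kˣ) : K) with hqi
  have hqqi : q * qi = 1 := by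
    rw [hq, hqi, ← Units.val_mul, mul_inv_cancel, Units.val_one]
  have hqiq : qi * q = 1 := by rw [mul_comm]; exact hqqi
  have hχa0 : χ α (0 : A) = 1 := by
    have h := hχ2 α 0 0
    rw [add_zero] at h
    exact (mul_left_cancel (a := χ α 0) (by rw [mul_one, ← h])).symm
  have hχ0a : χ (0 : A) α = 1 := by
    have h := hχ1 0 0 α
    rw [add_zero] at h
    exact (mul_left_cancel (a := χ 0 α) (by rw [mul_one, ← h])).symm
  have hχinv1 : ((χ α (-α) : Kˣ) : K) = qi := by
    rw [hqi]
    congr 1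
    exact (inv_eq_of_mul_eq_one_right (by rw [← hχ2 α α (-α), add_neg_cancel, hχa0])).symm
  have hχinv2 : ((χ (-α) α : Kˣ) : K) = qi := by
    rw [hqi]
    congr 1
    exact (inv_eq_of_mul_eq_one_right (by rw [← hχ1 α (-α) α, add_neg_cancel, hχ0a])).symm
  have hKF : M.Kel α * M.F = qi • (M.F * M.Kel α) := by
    rw [M.KF α, hχinv1]
  have hLF : M.Lel α * M.F = q • (M.F * M.Lel α) := by
    rw [M.LF α, ← hq]
  have hEK : M.E * M.Kel α = qi • (M.Kel α * M.E) := by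
    rw [M.KE α, ← hq, smul_smul, hqiq, one_smul]
  have hEL : M.E * M.Lel α = q • (M.Lel α * M.E) := by
    rw [M.LE α, hχinv2, smul_smul, hqqi, one_smul]
  induction r, hr using Nat.le_induction with
  | base =>
      constructor <;> simp [qnum, M.EF]
  | succ r hr1 ih =>
      obtain ⟨IH1, IH2⟩ := ih
      have hrr : r - 1 + 1 = r := by omega
      have hqir : qi ^ (r - 1) * qi = qi ^ r := by rw [← pow_succ, hrr]
      have hqn : qnum q (r + 1) = qnum q r + q ^ r := Finset.sum_range_succ _ _
      have hqn' : qnum q (r + 1) = q * qnum q r + 1 := by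
        rw [qnum, Finset.sum_range_succ']
        simp [qnum, Finset.mul_sum, pow_succ, mul_comm]
      have hpow : q ^ r * qi ^ r = 1 := by rw [← mul_pow, hqqi, one_pow]
      have hY : qnum q r • ((-(qi ^ r)) • M.Kel α + q • M.Lel α) + (-M.Kel α + M.Lel α)
          = qnum q (r + 1) • ((-(qi ^ r)) • M.Kel α + M.Lel α) := by
        match_scalars
        · linear_combination qi ^ r * hqn + hpow
        · linear_combination - hqn'
      constructor
      · have e1 : M.E * M.F ^ (r + 1) - M.F ^ (r + 1) * M.E =
            (M.E * M.F ^ r - M.F ^ r * M.E) * M.F + M.F ^ r * (M.E * M.F - M.F * M.E) := by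
          rw [pow_succ]; noncomm_ring
        rw [e1, IH1, M.EF]
        have hXF : ((-(qi ^ (r - 1))) • M.Kel α + M.Lel α) * M.F
            = M.F * ((-(qi ^ r)) • M.Kel α + q • M.Lel α) := by
          rw [add_mul, smul_mul_assoc, hKF, hLF, smul_smul, mul_add, mul_smul_comm,
            mul_smul_comm, neg_mul, hqir]
        have e2 : (qnum q r • (M.F ^ (r - 1) * ((-(qi ^ (r - 1))) • M.Kel α + M.Lel α))) * M.F
            = qnum q r • (M.F ^ r * ((-(qi ^ r)) • M.Kel α + q • M.Lel α)) := by
          rw [smul_mul_assoc, mul_assoc, hXF, ← mul_assoc, ← pow_succ, hrr]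
        rw [e2, Nat.add_sub_cancel, ← mul_smul_comm, ← mul_smul_comm, ← mul_add, hY]
      · have e1 : M.E ^ (r + 1) * M.F - M.F * M.E ^ (r + 1) =
            M.E * (M.E ^ r * M.F - M.F * M.E ^ r) + (M.E * M.F - M.F * M.E) * M.E ^ r := by
          rw [pow_succ']; noncomm_ring
        rw [e1, IH2, M.EF]
        have hEX : M.E * ((-(qi ^ (r - 1))) • M.Kel α + M.Lel α)
            = ((-(qi ^ r)) • M.Kel α + q • M.Lel α) * M.E := by
          rw [mul_add, mul_smul_comm, hEK, hEL, smul_smul, add_mul, smul_mul_assoc,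
            smul_mul_assoc, neg_mul, hqir]
        have e2 : M.E * (qnum q r • (((-(qi ^ (r - 1))) • M.Kel α + M.Lel α) * M.E ^ (r - 1)))
            = qnum q r • (((-(qi ^ r)) • M.Kel α + q • M.Lel α) * M.E ^ r) := by
          rw [mul_smul_comm, ← mul_assoc, hEX, mul_assoc, ← pow_succ', hrr]
        rw [e2, Nat.add_sub_cancel, ← smul_mul_assoc, ← smul_mul_assoc, ← add_mul, hY]
end

section
/- In the rank-one quantum group U(χ;α) with q := χ(α,α) ≠ 1, the element C := q·K_α + L_α + (1−q)·F·E commutes with E, F, K_λ, and L_μ for all λ, μ, i.e., C lies in the center of U(χ;α). -/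
/-- With `q := χ(α,α) ≠ 1`, the element `C := q K_α + L_α + (1−q) F E` commutes with
`E`, `F`, and all `K_λ`, `L_μ`; i.e. `C` is central in `U(χ;α)`. -/
theorem rankOne_central_element {K : Type*} [Field K] {A : Type*} [AddCommGroup A]
    (χ : A → A → Kˣ) (α : A)
    (hχ1 : ∀ a b c : A, χ (a + b) c = χ a c * χ b c)
    (hχ2 : ∀ a b c : A, χ a (b + c) = χ a b * χ a c)
    (hα : ∀ n : ℕ, 0 < n → n • α ≠ 0)
    {U : Type*} [Ring U] [Algebra K U] (M : RankOneQG K A χ α U)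
    (hq : ((χ α α : Kˣ) : K) ≠ 1) :
    let q : K := ((χ α α : Kˣ) : K)
    let C : U := q • M.Kel α + M.Lel α + (1 - q) • (M.F * M.E)
    C * M.E = M.E * C ∧ C * M.F = M.F * C ∧
      (∀ l : A, C * M.Kel l = M.Kel l * C) ∧ (∀ m : A, C * M.Lel m = M.Lel m * C) := by
  intro q C
  have hq0 : q ≠ 0 := (χ α α).ne_zero
  -- χ a 0 = 1 and χ 0 b = 1
  have h0r : ∀ a : A, χ a 0 = 1 := by
    intro a
    have h := hχ2 a 0 0
    rw [add_zero] at h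
    exact (left_eq_mul.mp h)
  have h0l : ∀ b : A, χ 0 b = 1 := by
    intro b
    have h := hχ1 0 0 b
    rw [add_zero] at h
    exact (left_eq_mul.mp h)
  have hnegr : ∀ a b : A, χ a (-b) = (χ a b)⁻¹ := by
    intro a b
    have h := hχ2 a b (-b)
    rw [add_neg_cancel, h0r] at h
    exact eq_inv_of_mul_eq_one_right h.symm
  have hnegl : ∀ a b : A, χ (-a) b = (χ a b)⁻¹ := by
    intro a b
    have h := hχ1 a (-a) b
    rw [add_neg_cancel, h0l] at h
    exact eq_inv_of_mul_eq_one_right h.symm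
  have hKE := M.KE α
  have hLE := M.LE α
  have hKF := M.KF α
  have hLF := M.LF α
  rw [hnegl] at hLE
  rw [hnegr] at hKF
  rw [Units.val_inv_eq_inv_val] at hLE hKF
  -- E * F in terms of F * E
  have hEF : M.E * M.F = -M.Kel α + M.Lel α + M.F * M.E := by
    have h := M.EF
    rw [sub_eq_iff_eq_add] at h
    rw [h]
  have hEFE : M.E * (M.F * M.E) =
      -((q : K) • (M.E * M.Kel α)) + q⁻¹ • (M.E * M.Lel α) + M.F * (M.E * M.E) := by
    rw [← mul_assoc, hEF, add_mul, add_mul, neg_mul, hKE, hLE, mul_assoc]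
  have hFEF : M.F * M.E * M.F =
      -(M.F * M.Kel α) + M.F * M.Lel α + M.F * (M.F * M.E) := by
    rw [mul_assoc, hEF, mul_add, mul_add, mul_neg]
  refine ⟨?_, ?_, ?_, ?_⟩
  · show (q • M.Kel α + M.Lel α + (1 - q) • (M.F * M.E)) * M.E
        = M.E * (q • M.Kel α + M.Lel α + (1 - q) • (M.F * M.E))
    rw [add_mul, add_mul, mul_add, mul_add, smul_mul_assoc, smul_mul_assoc,
      mul_smul_comm, mul_smul_comm, hKE, hLE, hEFE, mul_assoc]
    match_scalars <;> (try unfold q) <;> (field_simp; try ring)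
  · show (q • M.Kel α + M.Lel α + (1 - q) • (M.F * M.E)) * M.F
        = M.F * (q • M.Kel α + M.Lel α + (1 - q) • (M.F * M.E))
    rw [add_mul, add_mul, mul_add, mul_add, smul_mul_assoc, smul_mul_assoc,
      mul_smul_comm, mul_smul_comm, hKF, hLF, hFEF]
    match_scalars <;> (try unfold q) <;> (field_simp; try ring)
  · intro l
    have hKl : ((χ l (-α) : Kˣ) : K) * ((χ l α : Kˣ) : K) = 1 := by
      rw [hnegr, Units.val_inv_eq_inv_val, inv_mul_cancel₀ (χ l α).ne_zero]
    have hFEK : M.Kel l * (M.F * M.E) = M.F * M.E * M.Kel l := by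
      rw [← mul_assoc, M.KF, smul_mul_assoc, mul_assoc, M.KE, mul_smul_comm,
        smul_smul, hKl, one_smul, mul_assoc]
    show (q • M.Kel α + M.Lel α + (1 - q) • (M.F * M.E)) * M.Kel l
        = M.Kel l * (q • M.Kel α + M.Lel α + (1 - q) • (M.F * M.E))
    rw [add_mul, add_mul, mul_add, mul_add, smul_mul_assoc, smul_mul_assoc,
      mul_smul_comm, mul_smul_comm, hFEK, M.K_add, M.K_add, add_comm α l,
      ← M.KL_comm]
  · intro m
    have hLm : ((χ (-α) m : Kˣ) : K) * ((χ α m : Kˣ) : K) = 1 := by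
      rw [hnegl, Units.val_inv_eq_inv_val, inv_mul_cancel₀ (χ α m).ne_zero]
    have hFEL : M.Lel m * (M.F * M.E) = M.F * M.E * M.Lel m := by
      rw [← mul_assoc, M.LF, smul_mul_assoc, mul_assoc, M.LE, mul_smul_comm,
        smul_smul, mul_comm ((χ α m : Kˣ) : K), hLm, one_smul, mul_assoc]
    show (q • M.Kel α + M.Lel α + (1 - q) • (M.F * M.E)) * M.Lel m
        = M.Lel m * (q • M.Kel α + M.Lel α + (1 - q) • (M.F * M.E))
    rw [add_mul, add_mul, mul_add, mul_add, smul_mul_assoc, smul_mul_assoc,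
      mul_smul_comm, mul_smul_comm, hFEL, M.L_add, M.L_add, add_comm α m,
      M.KL_comm]
end

section
/- Let R = R(C, (V^a, Π^a, R(a))_{a ∈ A}) be a connected generalized root system of type a Cartan scheme C. Then for each a ∈ A and i ≠ j in I, −c^a_{ij} = max{ t ∈ ℤ≥0 : α^a_j + t·α^a_i ∈ R^+(a) }. -/
/-- A Cartan scheme `C(I, A, (τ_i), (C^a))`. -/
structure CartanScheme (I : Type*) [Fintype I] [DecidableEq I] (A : Type*) where
  τ : I → A → A
  c : A → I → I → ℤ
  c_diag : ∀ a i, c a i i = 2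
  c_nonpos : ∀ a i j, i ≠ j → c a i j ≤ 0
  c_zero_iff : ∀ a i j, i ≠ j → (c a i j = 0 ↔ c a j i = 0)
  τ_invol : ∀ i a, τ i (τ i a) = a
  c_invar : ∀ i a j, c (τ i a) i j = c a i j

namespace CartanScheme

variable {I : Type*} [Fintype I] [DecidableEq I] {A : Type*} (cs : CartanScheme I A)

/-- The map `s^a_i : V^a → V^{τ_i(a)}`, `α^a_j ↦ α^{τ_i(a)}_j − c^a_{ij} α^{τ_i(a)}_i`,
written in the coordinates given by the bases `Π^a`, `Π^{τ_i(a)}`. -/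
def sref (a : A) (i : I) (v : I → ℤ) : I → ℤ :=
  fun l => v l - (if l = i then ∑ j, cs.c a i j * v j else 0)

/-- `a_{f,t}`: the iterated images `a_{f,0} = a`, `a_{f,t} = τ_{f(t)}(a_{f,t-1})`. -/
def obj (a : A) (f : ℕ → I) : ℕ → A
  | 0 => a
  | t + 1 => cs.τ (f (t + 1)) (obj a f t)

/-- `1^a s_{f,t} : V^{a_{f,t}} → V^a`, defined by `1^a s_{f,0} = id` and
`1^a s_{f,t} = 1^a s_{f,t-1} ∘ s^{a_{f,t}}_{f(t)}`. -/
def wmap (a : A) (f : ℕ → I) : ℕ → (I → ℤ) → (I → ℤ)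
  | 0 => id
  | t + 1 => wmap a f t ∘ cs.sref (cs.obj a f (t + 1)) (f (t + 1))

end CartanScheme

/-- A connected generalized root system of type a Cartan scheme, with the spaces `V^a`
written in the coordinates given by the bases `Π^a` (so `α^a_i` is `Pi.single i 1`). -/
structure GenRootSystem (I : Type*) [Fintype I] [DecidableEq I] (A : Type*)
    extends CartanScheme I A where
  R : A → Set (I → ℤ)
  R1 : ∀ a, R a = (R a ∩ {v | ∀ i, 0 ≤ v i}) ∪ (-(R a ∩ {v | ∀ i, 0 ≤ v i}))
  R2 : ∀ a i, R a ∩ (Set.range fun z : ℤ => z • (Pi.single i 1 : I → ℤ)) =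
        {Pi.single i 1, -Pi.single i 1}
  R3 : ∀ a i, toCartanScheme.sref a i '' R a = R (τ i a)
  R4 : ∀ a b, a = b ↔ ∃ (f : ℕ → I) (t : ℕ), toCartanScheme.obj a f t = b ∧
        ∀ i, toCartanScheme.wmap a f t (Pi.single i 1) = Pi.single i 1
  R5 : ∀ a b, ∃ (f : ℕ → I) (t : ℕ), toCartanScheme.obj a f t = b

namespace GenRootSystem

variable {I : Type*} [Fintype I] [DecidableEq I] {A : Type*} (rs : GenRootSystem I A)

/-- The positive roots `R^+(a)`. -/
def Rp (a : A) : Set (I → ℤ) := rs.R a ∩ {v | ∀ i, 0 ≤ v i}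

/-- `a_{f,t}` for the root system. -/
def obj (a : A) (f : ℕ → I) (t : ℕ) : A := rs.toCartanScheme.obj a f t

/-- `1^a s_{f,t}` for the root system. -/
def wmap (a : A) (f : ℕ → I) (t : ℕ) : (I → ℤ) → (I → ℤ) := rs.toCartanScheme.wmap a f t

end GenRootSystem

lemma sref_combo {I : Type*} [Fintype I] [DecidableEq I] {A : Type*}
    (cs : CartanScheme I A) (a : A) (i j : I) (hij : i ≠ j) (t : ℤ) :
    cs.sref a i ((Pi.single j 1 : I → ℤ) + t • (Pi.single i 1 : I → ℤ)) =
      (Pi.single j 1 : I → ℤ) + (-(cs.c a i j) - t) • (Pi.single i 1 : I → ℤ) := by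
  funext l
  simp only [CartanScheme.sref, Pi.add_apply, Pi.smul_apply, smul_eq_mul,
    Pi.single_apply, mul_ite, mul_one, mul_zero, mul_add, Finset.sum_add_distrib,
    Finset.sum_ite_eq', Finset.mem_univ, if_true, cs.c_diag]
  by_cases h : l = i <;> simp [h, hij.symm] <;> ring

lemma single_mem_R {I : Type*} [Fintype I] [DecidableEq I] {A : Type*}
    (rs : GenRootSystem I A) (b : A) (j : I) : (Pi.single j 1 : I → ℤ) ∈ rs.R b := by
  have h := rs.R2 b j
  have : (Pi.single j 1 : I → ℤ) ∈ rs.R b ∩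
      (Set.range fun z : ℤ => z • (Pi.single j 1 : I → ℤ)) := by
    rw [h]; left; rfl
  exact this.1

/-- In a connected generalized root system, for `i ≠ j`,
`−c^a_{ij} = max { t ∈ ℤ≥0 : α^a_j + t α^a_i ∈ R^+(a) }`. -/
theorem cartan_entry_eq_max {I : Type*} [Fintype I] [DecidableEq I] {A : Type*}
    (rs : GenRootSystem I A) (a : A) (i j : I) (hij : i ≠ j) :
    IsGreatest {t : ℤ | 0 ≤ t ∧
        ((Pi.single j 1 : I → ℤ) + t • (Pi.single i 1 : I → ℤ)) ∈ rs.Rp a}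
      (-(rs.c a i j)) := by
  have hc : 0 ≤ -(rs.c a i j) := by
    have := rs.c_nonpos a i j hij; omega
  constructor
  · refine ⟨hc, ?_, ?_⟩
    · -- α_j - c_{ij} α_i ∈ R a, via sref at τ_i a applied to α_j
      have h3 := rs.R3 (rs.τ i a) i
      rw [rs.τ_invol] at h3
      have hmem : rs.toCartanScheme.sref (rs.τ i a) i (Pi.single j 1) ∈ rs.R a := by
        rw [← h3]
        exact ⟨Pi.single j 1, single_mem_R rs (rs.τ i a) j, rfl⟩
      have hcal : rs.toCartanScheme.sref (rs.τ i a) i (Pi.single j 1) =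
          (Pi.single j 1 : I → ℤ) + (-(rs.c a i j)) • (Pi.single i 1 : I → ℤ) := by
        have := sref_combo rs.toCartanScheme (rs.τ i a) i j hij 0
        simpa [rs.c_invar] using this
      rwa [hcal] at hmem
    · intro l
      simp only [Pi.add_apply, Pi.smul_apply, Pi.single_apply, smul_eq_mul,
        mul_ite, mul_one, mul_zero]
      split <;> split <;> omega
  · rintro t ⟨ht0, htR, htpos⟩
    by_contra hgt
    push_neg at hgt
    -- apply sref a i, land in R (τ_i a) with a mixed-sign vector
    have h3 := rs.R3 a i
    set w := (Pi.single j 1 : I → ℤ) + (-(rs.c a i j) - t) • (Pi.single i 1 : I → ℤ)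
      with hw
    have hwmem : w ∈ rs.R (rs.τ i a) := by
      rw [← h3]
      exact ⟨_, htR, sref_combo rs.toCartanScheme a i j hij t⟩
    have hwi : w i = -(rs.c a i j) - t := by
      simp [hw, Pi.single_apply, hij.symm]
    have hwj : w j = 1 := by
      simp [hw, Pi.single_apply, hij.symm, hij]
    have h1 := rs.R1 (rs.τ i a)
    rw [h1] at hwmem
    rcases hwmem with ⟨_, hpos⟩ | hneg
    · have := hpos i; omega
    · rw [Set.mem_neg] at hneg
      have := hneg.2 j
      simp only [Pi.neg_apply] at this
      omega
end

section
/- Let R be a connected generalized root system, a an object, and i,j ∈ I with m := m^a_{ij} = |R^+(a) ∩ (ℤ≥0 α^a_i + ℤ≥0 α^a_j)| finite. Let f alternate i,j,i,j,…. Then a_{f,2m} = a, the composite 1^a s_{f,2m} is the identity of V^a, and R^+(a) ∩ (ℤ≥0 α^a_i + ℤ≥0 α^a_j) = { 1^a s_{f,t-1}(α^{a_{f,t-1}}_{f(t)}) : t ∈ {1,…,m} }. -/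
/-!
Let `i ≠ j` (if `i = j`, then `P = {α_i}`, `m = 1` and `s_i s_i = id`).
Write `P = R^+(a) ∩ (ℤα_i + ℤα_j)`, `β_t = 1^a s_{f,t-1}(α_{f(t)})` and `B_t = {β_1, …, β_t}`.
By induction on `t ≤ m = |P|`, the `β_t` are distinct elements of `P` and `1^a s_{f,t}` maps the
positive roots of `a_{f,t}` in the plane `ℤα_i + ℤα_j` onto `(P \ B_t) ∪ -B_t`. The new root
`β_{t+1}` cannot lie in `-B_t`: otherwise `1^a s_{f,t}` would send both simple roots of the plane,
`α_{f(t+1)}` and `α_{f(t)} ↦ -β_t`, hence all positive roots of the plane, to nonpositive vectors,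
leaving no preimage for the nonempty set `P \ B_t`.

At `t = m` this gives `B_m = P`, and `1^a s_{f,m}` maps the positive roots of the plane at
`a_{f,m}` onto `-P`. Doing the same once more from `a_{f,m}`, `w = 1^a s_{f,2m}` maps them onto `P`.
So `w` and `w⁻¹` are nonnegative on `α_i, α_j`; as the `{i, j}`-minor of `w` is `(-1)^{2m} = 1`,
`w` fixes `α_i` and `α_j`. For `l ∉ {i, j}`, `w α_l` and `w⁻¹ α_l` are positive roots agreeing with
`α_l` off `{i, j}`, and `α_l = w α_l + (w⁻¹ α_l - α_l)` forces `w α_l = α_l`. Hence `w = id`, and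
`a_{f,2m} = a` by axiom (R4).
-/

open Set

/-- `ℤα_i + ℤα_j`, in the coordinates of the basis `Π^a`. -/
def pairSpan {I : Type*} (i j : I) : Set (I → ℤ) := {v | ∀ l, l ≠ i → l ≠ j → v l = 0}

theorem pairSpan_comm {I : Type*} (i j : I) : pairSpan i j = pairSpan j i := by
  ext v
  exact ⟨fun h l hj hi => h l hi hj, fun h l hi hj => h l hj hi⟩

section PairSpan

variable {I : Type*} [DecidableEq I] {i j : I}

theorem single_mem_pairSpan {k : I} (hk : k = i ∨ k = j) : (Pi.single k 1 : I → ℤ) ∈ pairSpan i j :=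
  fun _ hi hj => Pi.single_eq_of_ne (by rcases hk with rfl | rfl <;> assumption) 1

theorem eq_add_of_mem_pairSpan (hij : i ≠ j) {v : I → ℤ} (hv : v ∈ pairSpan i j) :
    v = v i • Pi.single i 1 + v j • Pi.single j 1 := by
  funext l
  by_cases hli : l = i
  · subst hli; simp [hij]
  by_cases hlj : l = j
  · subst hlj; simp [hli]
  simp [hli, hlj, hv l hli hlj]

end PairSpan

theorem insert_neg_diff_union_neg {α : Type*} [InvolutiveNeg α] {P B : Set α} {b : α}
    (hb : b ∉ -B) : insert (-b) ((P \ B ∪ -B) \ {b}) = P \ insert b B ∪ -insert b B := by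
  ext x
  simp only [mem_insert_iff, mem_sdiff, mem_union, mem_neg, mem_singleton_iff, neg_eq_iff_eq_neg]
  constructor
  · rintro (rfl | ⟨h | h, hxb⟩)
    · exact Or.inr (Or.inl rfl)
    · exact Or.inl ⟨h.1, by tauto⟩
    · exact Or.inr (Or.inr h)
  · rintro (h | rfl | h)
    · exact Or.inr ⟨Or.inl ⟨h.1, by tauto⟩, by tauto⟩
    · exact Or.inl rfl
    · refine Or.inr ⟨Or.inr h, ?_⟩
      rintro rfl
      exact hb (mem_neg.mpr h)

def IsAlternating {I : Type*} (f : ℕ → I) (i j : I) : Prop :=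
  (∀ t, 1 ≤ t → f t = i ∨ f t = j) ∧ ∀ t, 1 ≤ t → f (t + 1) ≠ f t

namespace IsAlternating

variable {I : Type*} {f : ℕ → I} {i j : I}

theorem pairSpan_eq (hf : IsAlternating f i j) {t : ℕ} (ht : 1 ≤ t) :
    pairSpan (f (t + 1)) (f t) = pairSpan i j := by
  have hne := hf.2 t ht
  rcases hf.1 (t + 1) (by omega) with h1 | h1 <;> rcases hf.1 t ht with h2 | h2 <;>
    simp_all [pairSpan_comm]

theorem shift (hf : IsAlternating f i j) (n : ℕ) : IsAlternating (fun u => f (n + u)) i j :=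
  ⟨fun t ht => hf.1 (n + t) (by omega), fun t ht => hf.2 (n + t) (by omega)⟩

end IsAlternating

theorem isAlternating_ite {I : Type*} {i j : I} (hij : i ≠ j) :
    IsAlternating (fun t => if t % 2 = 1 then i else j) i j := by
  refine ⟨fun t _ => by beta_reduce; split_ifs <;> simp, fun t _ => ?_⟩
  beta_reduce
  rcases Nat.mod_two_eq_zero_or_one t with h | h
  · rw [if_pos (by omega), if_neg (by omega)]; exact hij
  · rw [if_neg (by omega), if_pos h]; exact hij.symm

namespace CartanScheme

variable {I : Type*} [Fintype I] [DecidableEq I] {A : Type*} (cs : CartanScheme I A)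

theorem sref_apply_of_ne (a : A) {i l : I} (hl : l ≠ i) (v : I → ℤ) : cs.sref a i v l = v l := by
  simp [sref, hl]

theorem sref_eq_sub (a : A) (i : I) (v : I → ℤ) :
    cs.sref a i v = v - (∑ j, cs.c a i j * v j) • Pi.single i 1 := by
  funext l
  by_cases hl : l = i <;> simp [sref, hl]

theorem sref_single (a : A) (k l : I) :
    cs.sref a k (Pi.single l 1) = Pi.single l 1 - cs.c a k l • Pi.single k 1 := by
  rw [sref_eq_sub]
  simp [Pi.single_apply]

theorem sref_single_self (a : A) (k : I) : cs.sref a k (Pi.single k 1) = -Pi.single k 1 := by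
  rw [sref_single, c_diag]
  module

theorem sref_involutive (a : A) (i : I) : Function.Involutive (cs.sref a i) := by
  intro v
  have hsum : ∑ j, cs.c a i j * cs.sref a i v j = -∑ j, cs.c a i j * v j := by
    simp only [sref, mul_sub, Finset.sum_sub_distrib, mul_ite, mul_zero, Finset.sum_ite_eq',
      Finset.mem_univ, if_true, c_diag]
    ring
  rw [sref_eq_sub _ _ _ (cs.sref a i v), hsum, sref_eq_sub]
  module

theorem sref_tau (a : A) (i : I) : cs.sref (cs.τ i a) i = cs.sref a i := by
  funext v l
  simp [sref, c_invar]

def srefEquiv (a : A) (i : I) : (I → ℤ) ≃ₗ[ℤ] (I → ℤ) :=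
  LinearEquiv.ofInvolutive
    { toFun := cs.sref a i
      map_add' := fun u v => by simp only [sref_eq_sub, Pi.add_apply, mul_add,
        Finset.sum_add_distrib, add_smul]; abel
      map_smul' := fun z v => by simp only [sref_eq_sub, Pi.smul_apply, smul_eq_mul,
        mul_left_comm _ z, ← Finset.mul_sum, mul_smul, RingHom.id_apply, smul_sub] }
    (cs.sref_involutive a i)

def wmapEquiv (a : A) (f : ℕ → I) : ℕ → (I → ℤ) ≃ₗ[ℤ] (I → ℤ)
  | 0 => LinearEquiv.refl ℤ _
  | t + 1 => (cs.srefEquiv (cs.obj a f (t + 1)) (f (t + 1))).trans (wmapEquiv a f t)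

theorem coe_wmapEquiv (a : A) (f : ℕ → I) (t : ℕ) : ⇑(cs.wmapEquiv a f t) = cs.wmap a f t := by
  induction t with
  | zero => rfl
  | succ t ih => simp only [wmapEquiv, wmap, ← ih]; rfl

theorem wmapEquiv_succ_apply (a : A) (f : ℕ → I) (t : ℕ) (v : I → ℤ) :
    cs.wmapEquiv a f (t + 1) v =
      cs.wmapEquiv a f t (cs.sref (cs.obj a f (t + 1)) (f (t + 1)) v) := rfl

theorem tau_obj_succ (a : A) (f : ℕ → I) (t : ℕ) :
    cs.τ (f (t + 1)) (cs.obj a f (t + 1)) = cs.obj a f t :=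
  cs.τ_invol _ _

theorem obj_add (a : A) (f : ℕ → I) (n s : ℕ) :
    cs.obj a f (n + s) = cs.obj (cs.obj a f n) (fun u => f (n + u)) s := by
  induction s with
  | zero => rfl
  | succ s ih => exact congrArg (cs.τ (f (n + s + 1))) ih

theorem coe_wmapEquiv_add (a : A) (f : ℕ → I) (n s : ℕ) :
    ⇑(cs.wmapEquiv a f (n + s)) =
      cs.wmapEquiv a f n ∘ cs.wmapEquiv (cs.obj a f n) (fun u => f (n + u)) s := by
  induction s with
  | zero => rfl
  | succ s ih =>
    funext v
    rw [← add_assoc, wmapEquiv_succ_apply, ih, add_assoc, obj_add]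
    rfl

theorem obj_succ_succ_of_eq (a : A) {f : ℕ → I} {t : ℕ} (h : f (t + 1 + 1) = f (t + 1)) :
    cs.obj a f (t + 1 + 1) = cs.obj a f t := by
  rw [obj, h, tau_obj_succ]

theorem wmapEquiv_succ_succ_of_eq (a : A) {f : ℕ → I} {t : ℕ} (h : f (t + 1 + 1) = f (t + 1))
    (v : I → ℤ) : cs.wmapEquiv a f (t + 1 + 1) v = cs.wmapEquiv a f t v := by
  rw [wmapEquiv_succ_apply, wmapEquiv_succ_apply, cs.obj_succ_succ_of_eq a h, h, obj, sref_tau,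
    sref_involutive]

theorem wmapEquiv_apply_of_ne {i j : I} {f : ℕ → I} (hf : ∀ t, 1 ≤ t → f t = i ∨ f t = j)
    (a : A) (t : ℕ) (v : I → ℤ) {l : I} (hli : l ≠ i) (hlj : l ≠ j) :
    cs.wmapEquiv a f t v l = v l := by
  induction t generalizing v with
  | zero => rfl
  | succ t ih =>
    have hl : l ≠ f (t + 1) := by rcases hf (t + 1) (by omega) with h | h <;> rw [h] <;> assumption
    rw [wmapEquiv_succ_apply, ih, cs.sref_apply_of_ne _ hl]

theorem image_wmapEquiv_succ (a : A) (f : ℕ → I) (t : ℕ) (X : Set (I → ℤ)) :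
    cs.wmapEquiv a f (t + 1) '' X =
      cs.wmapEquiv a f t '' (cs.sref (cs.obj a f (t + 1)) (f (t + 1)) '' X) := by
  rw [image_image]
  rfl

theorem sref_mem_pairSpan {i j k : I} (hk : k = i ∨ k = j) (a : A) {v : I → ℤ}
    (hv : v ∈ pairSpan i j) : cs.sref a k v ∈ pairSpan i j := fun l hli hlj => by
  rw [cs.sref_apply_of_ne a (by rcases hk with rfl | rfl <;> assumption)]
  exact hv l hli hlj

theorem wmapEquiv_minor {i j : I} (hij : i ≠ j) {f : ℕ → I}
    (hf : ∀ t, 1 ≤ t → f t = i ∨ f t = j) (a : A) (t : ℕ) :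
    cs.wmapEquiv a f t (Pi.single i 1) i * cs.wmapEquiv a f t (Pi.single j 1) j -
      cs.wmapEquiv a f t (Pi.single i 1) j * cs.wmapEquiv a f t (Pi.single j 1) i =
      (-1) ^ t := by
  induction t with
  | zero => simp [wmapEquiv, hij, hij.symm]
  | succ t ih =>
    have hstep : ∀ l, cs.wmapEquiv a f (t + 1) (Pi.single l 1) =
        cs.wmapEquiv a f t (Pi.single l 1) -
          cs.c (cs.obj a f (t + 1)) (f (t + 1)) l •
            cs.wmapEquiv a f t (Pi.single (f (t + 1)) 1) := by
      intro l
      rw [wmapEquiv_succ_apply, sref_single, map_sub, map_smul]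
    rcases hf (t + 1) (by omega) with hk | hk <;>
    · simp only [hstep, hk, c_diag, Pi.sub_apply, Pi.smul_apply, smul_eq_mul, pow_succ]
      linear_combination (-1 : ℤ) * ih

/-- `β_t`; `seqRoots a f t` is `B_t = {β_1, …, β_t}`. -/
def seqRoot (a : A) (f : ℕ → I) (t : ℕ) : I → ℤ := cs.wmapEquiv a f (t - 1) (Pi.single (f t) 1)

def seqRoots (a : A) (f : ℕ → I) (t : ℕ) : Set (I → ℤ) := cs.seqRoot a f '' Icc 1 t

theorem wmapEquiv_succ_single (a : A) (f : ℕ → I) (t : ℕ) :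
    cs.wmapEquiv a f (t + 1) (Pi.single (f (t + 1)) 1) = -cs.seqRoot a f (t + 1) := by
  rw [wmapEquiv_succ_apply, sref_single_self, map_neg]
  rfl

theorem seqRoots_succ (a : A) (f : ℕ → I) (t : ℕ) :
    cs.seqRoots a f (t + 1) = insert (cs.seqRoot a f (t + 1)) (cs.seqRoots a f t) := by
  rw [seqRoots, seqRoots, ← image_insert_eq]
  congr 1
  ext s
  simp only [mem_Icc, mem_insert_iff]
  omega

theorem seqRoot_mem_seqRoots (a : A) (f : ℕ → I) {t : ℕ} (ht : 1 ≤ t) :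
    cs.seqRoot a f t ∈ cs.seqRoots a f t :=
  mem_image_of_mem _ ⟨ht, le_rfl⟩

end CartanScheme

namespace GenRootSystem

variable {I : Type*} [Fintype I] [DecidableEq I] {A : Type*} (rs : GenRootSystem I A)

theorem mem_Rp {a : A} {v : I → ℤ} : v ∈ rs.Rp a ↔ v ∈ rs.R a ∧ 0 ≤ v := Iff.rfl

theorem nonneg_or_nonpos_of_mem_R {a : A} {v : I → ℤ} (hv : v ∈ rs.R a) : 0 ≤ v ∨ v ≤ 0 := by
  rw [rs.R1 a] at hv
  rcases hv with hv | hv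
  · exact Or.inl hv.2
  · exact Or.inr (neg_nonneg.mp hv.2)

theorem smul_single_mem_R_iff (a : A) (k : I) (z : ℤ) :
    z • (Pi.single k 1 : I → ℤ) ∈ rs.R a ↔ z = 1 ∨ z = -1 := by
  have h := Set.ext_iff.mp (rs.R2 a k) (z • Pi.single k 1)
  simp only [mem_inter_iff, mem_range, exists_apply_eq_apply, and_true, mem_insert_iff,
    mem_singleton_iff] at h
  rw [h]
  constructor
  · rintro (h | h) <;> [left; right] <;> simpa using congrFun h k
  · rintro (rfl | rfl) <;> simp

theorem single_mem_R (a : A) (k : I) : (Pi.single k 1 : I → ℤ) ∈ rs.R a := by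
  simpa using (rs.smul_single_mem_R_iff a k 1).mpr (Or.inl rfl)

theorem single_mem_Rp (a : A) (k : I) : (Pi.single k 1 : I → ℤ) ∈ rs.Rp a :=
  rs.mem_Rp.mpr ⟨rs.single_mem_R a k, Pi.single_nonneg.mpr zero_le_one⟩

theorem neg_single_notMem_Rp (a : A) (k : I) : (-Pi.single k 1 : I → ℤ) ∉ rs.Rp a :=
  fun h => by simpa using h.2 k

theorem zero_notMem_R [Nonempty I] (a : A) : (0 : I → ℤ) ∉ rs.R a := by
  obtain ⟨k⟩ := ‹Nonempty I›
  simpa using rs.smul_single_mem_R_iff a k 0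

theorem eq_single_or_eq_neg_single {a : A} {k : I} {v : I → ℤ} (hv : v ∈ rs.R a)
    (hsupp : ∀ l, l ≠ k → v l = 0) : v = Pi.single k 1 ∨ v = -Pi.single k 1 := by
  have hvk : v k • Pi.single k 1 = v := by
    funext l
    by_cases hl : l = k
    · subst hl; simp
    · simp [hl, hsupp l hl]
  rcases (rs.smul_single_mem_R_iff a k (v k)).mp (by rwa [hvk]) with h | h <;>
  · rw [← hvk, h]; simp

theorem sref_mem_Rp {a : A} {k : I} {v : I → ℤ} (hv : v ∈ rs.Rp a) (hne : v ≠ Pi.single k 1) :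
    rs.sref a k v ∈ rs.Rp (rs.τ k a) := by
  have hR : rs.sref a k v ∈ rs.R (rs.τ k a) := rs.R3 a k ▸ mem_image_of_mem _ hv.1
  refine ⟨hR, ?_⟩
  rcases rs.nonneg_or_nonpos_of_mem_R hR with h | h
  · exact h
  have hsupp : ∀ l, l ≠ k → v l = 0 := fun l hl =>
    le_antisymm (rs.sref_apply_of_ne a hl v ▸ h l) (hv.2 l)
  rcases rs.eq_single_or_eq_neg_single hv.1 hsupp with rfl | rfl
  · exact absurd rfl hne
  · exact absurd hv (rs.neg_single_notMem_Rp a k)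

theorem image_sref_Rp (a : A) (k : I) :
    rs.sref a k '' rs.Rp a = insert (-Pi.single k 1) (rs.Rp (rs.τ k a) \ {Pi.single k 1}) := by
  ext x
  constructor
  · rintro ⟨v, hv, rfl⟩
    by_cases hvk : v = Pi.single k 1
    · left
      rw [hvk, rs.sref_single_self]
    · refine Or.inr ⟨rs.sref_mem_Rp hv hvk, fun hx => rs.neg_single_notMem_Rp a k ?_⟩
      rwa [← rs.sref_involutive a k v, mem_singleton_iff.mp hx, rs.sref_single_self] at hv
  · rintro (rfl | ⟨hx, hxk⟩)
    · exact ⟨_, rs.single_mem_Rp a k, rs.sref_single_self a k⟩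
    · refine ⟨rs.sref a k x, ?_, rs.sref_involutive a k x⟩
      simpa only [rs.τ_invol, rs.sref_tau] using rs.sref_mem_Rp hx hxk

theorem image_wmapEquiv_R (a : A) (f : ℕ → I) (t : ℕ) :
    rs.wmapEquiv a f t '' rs.R (rs.toCartanScheme.obj a f t) = rs.R a := by
  induction t with
  | zero => exact image_id _
  | succ t ih => rw [rs.image_wmapEquiv_succ, rs.R3, rs.tau_obj_succ, ih]

theorem image_sref_Rp_inter_pairSpan {i j k : I} (hk : k = i ∨ k = j) (a : A) :
    rs.sref a k '' (rs.Rp a ∩ pairSpan i j) =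
      insert (-Pi.single k 1) ((rs.Rp (rs.τ k a) ∩ pairSpan i j) \ {Pi.single k 1}) := by
  have hF : rs.sref a k '' pairSpan i j = pairSpan i j := by
    refine Subset.antisymm ?_ fun v hv =>
      ⟨_, rs.sref_mem_pairSpan hk a hv, rs.sref_involutive a k v⟩
    rintro _ ⟨v, hv, rfl⟩
    exact rs.sref_mem_pairSpan hk a hv
  have hneg : -Pi.single k 1 ∈ pairSpan i j := by
    rw [← rs.sref_single_self a k]
    exact rs.sref_mem_pairSpan hk a (single_mem_pairSpan hk)
  rw [image_inter (rs.sref_involutive a k).injective, hF, rs.image_sref_Rp,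
    insert_inter_of_mem hneg, sdiff_inter_right_comm]

theorem image_wmapEquiv_succ_Rp_inter_pairSpan {i j : I} {f : ℕ → I} {t : ℕ}
    (hk : f (t + 1) = i ∨ f (t + 1) = j) (a : A) :
    rs.wmapEquiv a f (t + 1) '' (rs.Rp (rs.toCartanScheme.obj a f (t + 1)) ∩ pairSpan i j) =
      insert (-rs.seqRoot a f (t + 1))
        (rs.wmapEquiv a f t '' (rs.Rp (rs.toCartanScheme.obj a f t) ∩ pairSpan i j) \
          {rs.seqRoot a f (t + 1)}) := by
  rw [rs.image_wmapEquiv_succ, rs.image_sref_Rp_inter_pairSpan hk, rs.tau_obj_succ,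
    image_insert_eq, image_sdiff (LinearEquiv.injective _), image_singleton, map_neg]
  rfl

theorem seqRoot_succ_notMem_neg {i j : I} {f : ℕ → I} (hf : IsAlternating f i j) {a : A} {t : ℕ}
    (hB : rs.seqRoots a f t ⊆ rs.Rp a ∩ pairSpan i j)
    (hnonempty : ((rs.Rp a ∩ pairSpan i j) \ rs.seqRoots a f t).Nonempty)
    (himg : rs.wmapEquiv a f t '' (rs.Rp (rs.toCartanScheme.obj a f t) ∩ pairSpan i j) =
      (rs.Rp a ∩ pairSpan i j) \ rs.seqRoots a f t ∪ -rs.seqRoots a f t) :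
    rs.seqRoot a f (t + 1) ∉ -rs.seqRoots a f t := by
  intro hneg
  obtain _ | t := t
  · simp [CartanScheme.seqRoots] at hneg
  set W := rs.wmapEquiv a f (t + 1)
  have hnonpos : ∀ k, k = f (t + 1 + 1) ∨ k = f (t + 1) → W (Pi.single k 1) ≤ 0 := by
    rintro k (rfl | rfl)
    · exact neg_nonneg.mp (rs.mem_Rp.mp (hB hneg).1).2
    · rw [rs.wmapEquiv_succ_single]
      exact neg_nonpos.mpr (rs.mem_Rp.mp (hB (rs.seqRoot_mem_seqRoots a f le_add_self)).1).2
  obtain ⟨γ, hγP, hγB⟩ := hnonempty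
  obtain ⟨δ, ⟨hδ, hδF⟩, rfl⟩ :
      γ ∈ W '' (rs.Rp (rs.toCartanScheme.obj a f (t + 1)) ∩ pairSpan i j) := by
    rw [himg]
    exact Or.inl ⟨hγP, hγB⟩
  rw [← hf.pairSpan_eq le_add_self] at hδF
  have hWδ : W δ ≤ 0 := by
    rw [eq_add_of_mem_pairSpan (hf.2 _ le_add_self) hδF, map_add, map_smul, map_smul]
    exact add_nonpos (smul_nonpos_of_nonneg_of_nonpos (hδ.2 _) (hnonpos _ (Or.inl rfl)))
      (smul_nonpos_of_nonneg_of_nonpos (hδ.2 _) (hnonpos _ (Or.inr rfl)))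
  have : Nonempty I := ⟨i⟩
  have hRδ := (rs.mem_Rp.mp hγP.1)
  exact rs.zero_notMem_R a (le_antisymm hWδ hRδ.2 ▸ hRδ.1)

theorem seqRoots_spec {i j : I} {f : ℕ → I} (hf : IsAlternating f i j) {a : A} {t : ℕ}
    (ht : t ≤ (rs.Rp a ∩ pairSpan i j).ncard) :
    rs.seqRoots a f t ⊆ rs.Rp a ∩ pairSpan i j ∧ (rs.seqRoots a f t).ncard = t ∧
      rs.wmapEquiv a f t '' (rs.Rp (rs.toCartanScheme.obj a f t) ∩ pairSpan i j) =
        (rs.Rp a ∩ pairSpan i j) \ rs.seqRoots a f t ∪ -rs.seqRoots a f t := by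
  induction t with
  | zero =>
    simp only [CartanScheme.seqRoots, Icc_eq_empty_of_lt zero_lt_one, image_empty, sdiff_empty,
      neg_empty, union_empty, ncard_empty, empty_subset, true_and]
    exact image_id _
  | succ t ih =>
    obtain ⟨hB, hcard, himg⟩ := ih (by omega)
    have hfinB : (rs.seqRoots a f t).Finite := (finite_Icc 1 t).image _
    have hk := hf.1 (t + 1) le_add_self
    have hneg := rs.seqRoot_succ_notMem_neg hf hB
      (sdiff_nonempty_of_ncard_lt_ncard (by omega) hfinB) himg
    have hnew : rs.seqRoot a f (t + 1) ∈ (rs.Rp a ∩ pairSpan i j) \ rs.seqRoots a f t := by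
      have : rs.seqRoot a f (t + 1) ∈
          rs.wmapEquiv a f t '' (rs.Rp (rs.toCartanScheme.obj a f t) ∩ pairSpan i j) :=
        ⟨_, ⟨rs.single_mem_Rp _ _, single_mem_pairSpan hk⟩, rfl⟩
      rw [himg] at this
      exact this.resolve_right hneg
    rw [rs.seqRoots_succ]
    refine ⟨insert_subset hnew.1 hB, ?_, ?_⟩
    · rw [ncard_insert_of_notMem hnew.2 hfinB, hcard]
    · rw [rs.image_wmapEquiv_succ_Rp_inter_pairSpan hk, himg, insert_neg_diff_union_neg hneg]

theorem seqRoots_ncard {i j : I} {f : ℕ → I} (hf : IsAlternating f i j) {a : A}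
    (hfin : (rs.Rp a ∩ pairSpan i j).Finite) :
    rs.seqRoots a f (rs.Rp a ∩ pairSpan i j).ncard = rs.Rp a ∩ pairSpan i j := by
  obtain ⟨hB, hcard, -⟩ := rs.seqRoots_spec hf le_rfl
  exact eq_of_subset_of_ncard_le hB hcard.ge hfin

theorem image_wmapEquiv_ncard {i j : I} {f : ℕ → I} (hf : IsAlternating f i j) {a : A}
    (hfin : (rs.Rp a ∩ pairSpan i j).Finite) :
    rs.wmapEquiv a f (rs.Rp a ∩ pairSpan i j).ncard ''
        (rs.Rp (rs.toCartanScheme.obj a f (rs.Rp a ∩ pairSpan i j).ncard) ∩ pairSpan i j) =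
      -(rs.Rp a ∩ pairSpan i j) := by
  rw [(rs.seqRoots_spec hf le_rfl).2.2, rs.seqRoots_ncard hf hfin, sdiff_self, empty_union]

theorem image_wmapEquiv_two_mul {i j : I} {f : ℕ → I} (hf : IsAlternating f i j) {a : A}
    (hfin : (rs.Rp a ∩ pairSpan i j).Finite) :
    rs.wmapEquiv a f (2 * (rs.Rp a ∩ pairSpan i j).ncard) ''
        (rs.Rp (rs.toCartanScheme.obj a f (2 * (rs.Rp a ∩ pairSpan i j).ncard)) ∩ pairSpan i j) =
      rs.Rp a ∩ pairSpan i j := by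
  set m := (rs.Rp a ∩ pairSpan i j).ncard
  set b := rs.toCartanScheme.obj a f m
  have hhalf := rs.image_wmapEquiv_ncard hf hfin
  have hfinb : (rs.Rp b ∩ pairSpan i j).Finite :=
    Finite.of_finite_image (hhalf ▸ hfin.neg) (LinearEquiv.injective _).injOn
  have hcardb : (rs.Rp b ∩ pairSpan i j).ncard = m := by
    rw [← ncard_image_of_injective _ (rs.wmapEquiv a f m).injective, hhalf, ncard_neg]
  have hhalf' := rs.image_wmapEquiv_ncard (hf.shift m) hfinb
  rw [hcardb] at hhalf'
  rw [two_mul, rs.coe_wmapEquiv_add, rs.obj_add, image_comp, hhalf',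
    image_neg_of_apply_neg_eq_neg fun _ _ => map_neg _ _, hhalf, neg_neg]

theorem wmapEquiv_single_apply_eq_zero {i j : I} (hij : i ≠ j) {f : ℕ → I}
    (hf : ∀ t, 1 ≤ t → f t = i ∨ f t = j) {a : A} {t : ℕ} (ht : Even t)
    (himg : rs.wmapEquiv a f t '' (rs.Rp (rs.toCartanScheme.obj a f t) ∩ pairSpan i j) =
      rs.Rp a ∩ pairSpan i j) :
    rs.wmapEquiv a f t (Pi.single i 1) j = 0 := by
  set W := rs.wmapEquiv a f t
  have hdet := rs.wmapEquiv_minor hij hf a t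
  rw [ht.neg_one_pow] at hdet
  have hWi : W (Pi.single i 1) ∈ rs.Rp a ∩ pairSpan i j :=
    himg ▸ mem_image_of_mem W ⟨rs.single_mem_Rp _ i, single_mem_pairSpan (Or.inl rfl)⟩
  obtain ⟨δ, ⟨hδ, hδF⟩, hWδ⟩ : Pi.single i 1 ∈
      W '' (rs.Rp (rs.toCartanScheme.obj a f t) ∩ pairSpan i j) := by
    rw [himg]
    exact ⟨rs.single_mem_Rp a i, single_mem_pairSpan (Or.inl rfl)⟩
  rw [eq_add_of_mem_pairSpan hij hδF, map_add, map_smul, map_smul] at hWδ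
  have hδi := congrFun hWδ i
  have hδj := congrFun hWδ j
  simp only [Pi.add_apply, Pi.smul_apply, smul_eq_mul, Pi.single_eq_same,
    Pi.single_eq_of_ne hij.symm] at hδi hδj
  -- Cramer's rule: the `j`-coordinate of `W⁻¹ α_i` is `-(W α_i)_j`
  have hcramer : δ j = -W (Pi.single i 1) j := by
    linear_combination W (Pi.single i 1) i * hδj - W (Pi.single i 1) j * hδi - δ j * hdet
  have h1 := hδ.2 j
  have h2 := hWi.1.2 j
  omega

theorem wmapEquiv_single_left_eq_self {i j : I} (hij : i ≠ j) {f : ℕ → I}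
    (hf : ∀ t, 1 ≤ t → f t = i ∨ f t = j) {a : A} {t : ℕ} (ht : Even t)
    (himg : rs.wmapEquiv a f t '' (rs.Rp (rs.toCartanScheme.obj a f t) ∩ pairSpan i j) =
      rs.Rp a ∩ pairSpan i j) :
    rs.wmapEquiv a f t (Pi.single i 1) = Pi.single i 1 := by
  set W := rs.wmapEquiv a f t
  have hij0 : W (Pi.single i 1) j = 0 := rs.wmapEquiv_single_apply_eq_zero hij hf ht himg
  have hji0 : W (Pi.single j 1) i = 0 := by
    rw [pairSpan_comm] at himg
    exact rs.wmapEquiv_single_apply_eq_zero hij.symm (fun t ht => (hf t ht).symm) ht himg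
  have hdet := rs.wmapEquiv_minor hij hf a t
  rw [ht.neg_one_pow, hij0, hji0, mul_zero, sub_zero] at hdet
  have hWi : W (Pi.single i 1) ∈ rs.Rp a ∩ pairSpan i j :=
    himg ▸ mem_image_of_mem W ⟨rs.single_mem_Rp _ i, single_mem_pairSpan (Or.inl rfl)⟩
  rw [eq_add_of_mem_pairSpan hij hWi.2, hij0,
    Int.eq_one_of_mul_eq_one_right (hWi.1.2 i) hdet]
  simp

theorem wmapEquiv_single_eq_self_of_ne {i j : I} (hij : i ≠ j) {f : ℕ → I}
    (hf : ∀ t, 1 ≤ t → f t = i ∨ f t = j) {a : A} {t : ℕ}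
    (hi : rs.wmapEquiv a f t (Pi.single i 1) = Pi.single i 1)
    (hj : rs.wmapEquiv a f t (Pi.single j 1) = Pi.single j 1) {l : I} (hli : l ≠ i) (hlj : l ≠ j) :
    rs.wmapEquiv a f t (Pi.single l 1) = Pi.single l 1 := by
  set W := rs.wmapEquiv a f t
  have hfix : ∀ v ∈ pairSpan i j, W v = v := fun v hv => by
    nth_rw 1 [eq_add_of_mem_pairSpan hij hv]
    rw [map_add, map_smul, map_smul, hi, hj, ← eq_add_of_mem_pairSpan hij hv]
  have hcoord : ∀ v l', l' ≠ i → l' ≠ j → W v l' = v l' := fun v _ =>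
    rs.wmapEquiv_apply_of_ne hf a t v
  have hpos : ∀ {b : A} {v : I → ℤ}, v ∈ rs.R b → v l = 1 → 0 ≤ v := fun hv hvl =>
    (rs.nonneg_or_nonpos_of_mem_R hv).resolve_right fun h => by simpa [hvl] using h l
  have hγ : 0 ≤ W (Pi.single l 1) :=
    hpos (rs.image_wmapEquiv_R a f t ▸ mem_image_of_mem W (rs.single_mem_R _ l))
      (by rw [hcoord _ _ hli hlj, Pi.single_eq_same])
  obtain ⟨δ, hδR, hWδ⟩ : Pi.single l 1 ∈ W '' rs.R (rs.toCartanScheme.obj a f t) := by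
    rw [rs.image_wmapEquiv_R]
    exact rs.single_mem_R a l
  have hδcoord : ∀ l', l' ≠ i → l' ≠ j → δ l' = (Pi.single l 1 : I → ℤ) l' := fun l' h1 h2 => by
    rw [← hWδ, hcoord _ _ h1 h2]
  have hδ : 0 ≤ δ := hpos hδR (by rw [hδcoord l hli hlj, Pi.single_eq_same])
  have hu : δ - Pi.single l 1 ∈ pairSpan i j := fun l' h1 h2 => by
    rw [Pi.sub_apply, hδcoord l' h1 h2, sub_self]
  have hsum : W (Pi.single l 1) + (δ - Pi.single l 1) = Pi.single l 1 := by
    rw [← hfix _ hu, ← map_add, add_sub_cancel, hWδ]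
  funext l'
  by_cases h : l' = i ∨ l' = j
  · have hl' : (Pi.single l 1 : I → ℤ) l' = 0 :=
      Pi.single_eq_of_ne (fun h' => by rcases h with rfl | rfl <;> simp_all) 1
    have := congrFun hsum l'
    have := hγ l'
    have := hδ l'
    simp only [Pi.add_apply, Pi.sub_apply, Pi.zero_apply, hl'] at *
    omega
  · obtain ⟨h1, h2⟩ := not_or.mp h
    exact hcoord _ _ h1 h2

theorem wmapEquiv_single_eq_self {i j : I} (hij : i ≠ j) {f : ℕ → I}
    (hf : ∀ t, 1 ≤ t → f t = i ∨ f t = j) {a : A} {t : ℕ} (ht : Even t)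
    (himg : rs.wmapEquiv a f t '' (rs.Rp (rs.toCartanScheme.obj a f t) ∩ pairSpan i j) =
      rs.Rp a ∩ pairSpan i j) (k : I) :
    rs.wmapEquiv a f t (Pi.single k 1) = Pi.single k 1 := by
  have hi := rs.wmapEquiv_single_left_eq_self hij hf ht himg
  have hj := rs.wmapEquiv_single_left_eq_self hij.symm (fun t ht => (hf t ht).symm) ht
    (pairSpan_comm i j ▸ himg)
  by_cases hki : k = i
  · rwa [hki]
  by_cases hkj : k = j
  · rwa [hkj]
  exact rs.wmapEquiv_single_eq_self_of_ne hij hf hi hj hki hkj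

theorem Rp_inter_pairSpan_self (a : A) (i : I) :
    rs.Rp a ∩ pairSpan i i = {Pi.single i 1} := by
  ext v
  refine ⟨fun ⟨hv, hF⟩ => ?_, ?_⟩
  · rcases rs.eq_single_or_eq_neg_single hv.1 fun l hl => hF l hl hl with rfl | rfl
    · rfl
    · exact absurd hv (rs.neg_single_notMem_Rp a i)
  · rintro rfl
    exact ⟨rs.single_mem_Rp a i, single_mem_pairSpan (Or.inl rfl)⟩

end GenRootSystem

/-- Let `m := m^a_{ij} = |R^+(a) ∩ (ℤ≥0 α^a_i + ℤ≥0 α^a_j)|` be finite, and let `f`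
alternate `i, j, i, j, …` (i.e. `f(2t−1) = i`, `f(2t) = j`).  Then `a_{f,2m} = a`,
`1^a s_{f,2m} = id`, and
`R^+(a) ∩ (ℤ≥0 α^a_i + ℤ≥0 α^a_j) = { 1^a s_{f,t-1}(α^{a_{f,t-1}}_{f(t)}) : 1 ≤ t ≤ m }`. -/
theorem rank_two_longest {I : Type*} [Fintype I] [DecidableEq I] {A : Type*}
    (rs : GenRootSystem I A) (a : A) (i j : I)
    (hfin : (rs.Rp a ∩ {v | ∀ l, l ≠ i → l ≠ j → v l = 0}).Finite)
    (m : ℕ) (hm : (rs.Rp a ∩ {v | ∀ l, l ≠ i → l ≠ j → v l = 0}).ncard = m) :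
    rs.obj a (fun t => if t % 2 = 1 then i else j) (2 * m) = a ∧
    rs.wmap a (fun t => if t % 2 = 1 then i else j) (2 * m) = id ∧
    rs.Rp a ∩ {v | ∀ l, l ≠ i → l ≠ j → v l = 0} =
      {v | ∃ t : ℕ, 1 ≤ t ∧ t ≤ m ∧
        v = rs.wmap a (fun t => if t % 2 = 1 then i else j) (t - 1)
              (Pi.single (if t % 2 = 1 then i else j) 1)} := by
  set f : ℕ → I := fun t => if t % 2 = 1 then i else j
  obtain ⟨hroots, hfix⟩ : rs.seqRoots a f m = rs.Rp a ∩ pairSpan i j ∧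
      ∀ k, rs.wmapEquiv a f (2 * m) (Pi.single k 1) = Pi.single k 1 := by
    by_cases hij : i = j
    · subst hij
      change (rs.Rp a ∩ pairSpan i i).ncard = m at hm
      rw [rs.Rp_inter_pairSpan_self, ncard_singleton] at hm
      subst hm
      refine ⟨?_, fun k => rs.wmapEquiv_succ_succ_of_eq a (by simp [f]) _⟩
      simp [CartanScheme.seqRoots, CartanScheme.seqRoot, CartanScheme.wmapEquiv, f,
        rs.Rp_inter_pairSpan_self]
    · have hf := isAlternating_ite hij
      subst hm
      exact ⟨rs.seqRoots_ncard hf hfin, rs.wmapEquiv_single_eq_self hij hf.1 (even_two_mul _)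
        (rs.image_wmapEquiv_two_mul hf hfin)⟩
  have hid : rs.wmapEquiv a f (2 * m) = LinearEquiv.refl ℤ _ :=
    (Pi.basisFun ℤ I).ext' (by simpa using hfix)
  simp only [GenRootSystem.obj, GenRootSystem.wmap, ← CartanScheme.coe_wmapEquiv]
  refine ⟨((rs.R4 a _).mpr ⟨f, 2 * m, rfl, by simpa only [← CartanScheme.coe_wmapEquiv]⟩).symm,
    by rw [hid]; rfl, ?_⟩
  change rs.Rp a ∩ pairSpan i j = _
  rw [← hroots]
  ext v
  simp [CartanScheme.seqRoots, CartanScheme.seqRoot, eq_comm, f, and_assoc]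
end

section
/- Any nonempty proper subset of (K^×)^k of the form {z : z_1^{m_1}⋯z_k^{m_k} = d} with d a root of unity or 1 (d ∈ K^×_prim) and (m_1,…,m_k) ∈ ℤ^k is a finite union of '1-fundamental' subsets, i.e., sets of the form f_M^{-1}({d'} × (K^×)^{k-1}) for some M ∈ GL(k,ℤ) and d' ∈ K^×. -/
/-!
Write the exponent vector as `m = g • m₀` with `m₀` primitive (`g` the gcd of the entries). A
primitive vector is the first row of an invertible integer matrix `M`, since
`ℤᵏ = ℤ v ⊕ ker ⟨m₀, ·⟩` for any `v` with `⟨m₀, v⟩ = 1`. Then `∏ zᵢ^{mᵢ} = (f_M(z)₀)^g`, so the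
set is the union of the fibres `{f_M(z)₀ = w}` over the finitely many `g`-th roots `w` of `d`.
-/

/-- For `A ∈ GL(k,ℤ)`, the monomial map `f_A : (K^×)^k → (K^×)^k`,
`(f_A(z))_i = ∏_j z_j^{a_{ij}}`. -/
def fA {K : Type*} [Field K] {k : ℕ} (M : Matrix (Fin k) (Fin k) ℤ)
    (z : Fin k → Kˣ) : Fin k → Kˣ :=
  fun i => ∏ j, z j ^ (M i j)

open Module

section PID

open Matrix

variable {R : Type*} [CommRing R] [IsDomain R] [IsPrincipalIdealRing R]

theorem exists_eq_smul_unimodular_of_ne_zero {ι : Type*} [Fintype ι] {x : ι → R} (hx : x ≠ 0) :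
    ∃ g : R, g ≠ 0 ∧ ∃ m v : ι → R, x = g • m ∧ v ⬝ᵥ m = 1 := by
  obtain ⟨g, hI⟩ := (IsPrincipalIdealRing.principal (Ideal.span (Set.range x))).principal
  have hx_mem (i : ι) : x i ∈ R ∙ g := hI ▸ Ideal.subset_span ⟨i, rfl⟩
  choose m hm using fun i ↦ Submodule.mem_span_singleton.1 (hx_mem i)
  have hg_mem : g ∈ Ideal.span (Set.range x) := hI ▸ Submodule.mem_span_singleton_self g
  obtain ⟨v, hv⟩ := Ideal.mem_span_range_iff_exists_fun.1 hg_mem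
  have hg : g ≠ 0 := fun hg ↦ hx (funext fun i ↦ by simp [← hm i, hg])
  refine ⟨g, hg, m, v, funext fun i ↦ by simp [← hm i, mul_comm], mul_left_cancel₀ hg ?_⟩
  calc g * (v ⬝ᵥ m) = ∑ i, v i * x i := by
        simp only [dotProduct, Finset.mul_sum, ← hm, smul_eq_mul]
        exact Finset.sum_congr rfl fun i _ ↦ by ring
    _ = g * 1 := by rw [hv, mul_one]

theorem Module.Basis.exists_coord_zero_eq {M : Type*} [AddCommGroup M] [Module R M] {n : ℕ}
    (b₀ : Basis (Fin (n + 1)) R M) (φ : M →ₗ[R] R) {v : M} (hv : φ v = 1) :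
    ∃ b : Basis (Fin (n + 1)) R M, b.coord 0 = φ := by
  obtain ⟨r, bK⟩ := (LinearMap.ker φ).basisOfPid b₀
  have hli : ∀ c : R, ∀ x ∈ LinearMap.ker φ, c • v + x = 0 → c = 0 := fun c x hx h ↦ by
    simpa [hv, LinearMap.mem_ker.1 hx] using congrArg φ h
  have hsp : ∀ z : M, ∃ c : R, z + c • v ∈ LinearMap.ker φ := fun z ↦
    ⟨-φ z, by simp [hv]⟩
  let b := Basis.mkFinCons v bK hli hsp
  obtain rfl : r = n := by simpa using Fintype.card_congr (b.indexEquiv b₀)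
  refine ⟨b, b.ext fun i ↦ ?_⟩
  cases i using Fin.cases with
  | zero =>
    have hb : b 0 = v := by simp [b]
    rw [b.coord_apply, b.repr_self, hb, hv, Finsupp.single_eq_same]
  | succ j =>
    have hb : b j.succ = bK j := by simp [b]
    rw [b.coord_apply, b.repr_self, hb, LinearMap.mem_ker.1 (bK j).2]
    simp [Fin.succ_ne_zero]

theorem exists_isUnit_det_row_zero_eq {n : ℕ} {m v : Fin (n + 1) → R} (hv : v ⬝ᵥ m = 1) :
    ∃ M : Matrix (Fin (n + 1)) (Fin (n + 1)) R, IsUnit M.det ∧ M 0 = m := by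
  classical
  obtain ⟨b, hb⟩ := (Pi.basisFun R (Fin (n + 1))).exists_coord_zero_eq
    (Fintype.linearCombination R m) (v := v)
    (by simpa [Fintype.linearCombination_apply, dotProduct] using hv)
  refine ⟨b.toMatrix (Pi.basisFun R _), by simpa [Basis.det_apply] using b.isUnit_det _, ?_⟩
  ext j
  simp [Basis.toMatrix_apply, ← b.coord_apply, hb]

end PID

open Polynomial in
theorem Units.finite_setOf_zpow_eq {R : Type*} [CommRing R] [IsDomain R] {n : ℤ} (hn : n ≠ 0)
    (d : Rˣ) : {w : Rˣ | w ^ n = d}.Finite := by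
  classical
  have hn' : 0 < n.natAbs := Int.natAbs_pos.2 hn
  have hfin (c : Rˣ) : {w : Rˣ | w ^ n.natAbs = c}.Finite := by
    refine ((nthRoots n.natAbs (c : R)).toFinset.finite_toSet.preimage
      Units.val_injective.injOn).subset fun w hw ↦ ?_
    rw [Set.mem_preimage, Finset.mem_coe, Multiset.mem_toFinset, mem_nthRoots hn']
    exact_mod_cast congrArg Units.val hw.out
  refine ((hfin d).union (hfin d⁻¹)).subset fun w hw ↦ ?_
  replace hw : w ^ n = d := hw
  rcases Int.natAbs_eq n with h | h
  · left
    show w ^ n.natAbs = d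
    rwa [h, zpow_natCast] at hw
  · right
    show w ^ n.natAbs = d⁻¹
    rw [h, zpow_neg, zpow_natCast] at hw
    rw [← hw, inv_inv]

theorem setOf_prod_zpow_eq_eq_biUnion {K : Type*} [Field K] {k : ℕ}
    {M : Matrix (Fin k) (Fin k) ℤ} {i : Fin k} {g : ℤ} {mv : Fin k → ℤ} (h : mv = g • M i)
    (d : Kˣ) :
    {z : Fin k → Kˣ | ∏ j, z j ^ mv j = d} = ⋃ w ∈ {w : Kˣ | w ^ g = d}, {z | fA M z i = w} := by
  ext z
  simp [fA, h, mul_comm g, zpow_mul, Finset.prod_zpow]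

theorem pre_fundamental_is_union_of_fundamental_general {K : Type*} [Field K]
    {k : ℕ} (d : Kˣ) (mv : Fin k → ℤ)
    (hne : {z : Fin k → Kˣ | ∏ i, z i ^ (mv i) = d}.Nonempty)
    (hproper : {z : Fin k → Kˣ | ∏ i, z i ^ (mv i) = d} ≠ Set.univ) :
    ∃ (N : ℕ) (M : Fin N → Matrix (Fin k) (Fin k) ℤ) (d' : Fin N → Kˣ),
      (∀ y, IsUnit (M y).det) ∧
      {z : Fin k → Kˣ | ∏ i, z i ^ (mv i) = d} =
        ⋃ y : Fin N, {z | ∀ i : Fin k, (i : ℕ) = 0 → fA (M y) z i = d' y} := by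
  have hmv : mv ≠ 0 := by
    rintro rfl
    simp only [Pi.zero_apply, zpow_zero, Finset.prod_const_one] at hne hproper
    obtain ⟨-, rfl⟩ := hne
    exact hproper (Set.eq_univ_of_forall fun _ ↦ rfl)
  obtain ⟨n, rfl⟩ : ∃ n, k = n + 1 :=
    Nat.exists_eq_succ_of_ne_zero fun hk ↦ hmv (by subst hk; exact Subsingleton.elim _ _)
  obtain ⟨g, hg, m, v, hmv_eq, hv⟩ := exists_eq_smul_unimodular_of_ne_zero hmv
  obtain ⟨M, hM, hM0⟩ := exists_isUnit_det_row_zero_eq hv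
  obtain ⟨N, e, he⟩ := (Units.finite_setOf_zpow_eq hg d).fin_embedding
  refine ⟨N, fun _ ↦ M, e, fun _ ↦ hM, ?_⟩
  rw [setOf_prod_zpow_eq_eq_biUnion (hM0 ▸ hmv_eq) d, ← he, Set.biUnion_range]
  simp only [Fin.val_eq_zero_iff, forall_eq]

/-- Any nonempty proper subset of `(K^×)^k` of the form `{z : ∏ z_i^{m_i} = d}`, with
`d ∈ K^×` equal to `1` or a root of unity, is a finite union of `1`-fundamental subsets,
i.e. sets of the form `f_M⁻¹({d'} × (K^×)^{k-1})` with `M ∈ GL(k,ℤ)`, `d' ∈ K^×`. -/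
theorem pre_fundamental_is_union_of_fundamental {K : Type*} [Field K] [IsAlgClosed K]
    {k : ℕ} (d : Kˣ) (hd : ∃ n : ℕ, 0 < n ∧ d ^ n = 1) (mv : Fin k → ℤ)
    (hne : {z : Fin k → Kˣ | ∏ i, z i ^ (mv i) = d}.Nonempty)
    (hproper : {z : Fin k → Kˣ | ∏ i, z i ^ (mv i) = d} ≠ Set.univ) :
    ∃ (N : ℕ) (M : Fin N → Matrix (Fin k) (Fin k) ℤ) (d' : Fin N → Kˣ),
      (∀ y, IsUnit (M y).det) ∧
      {z : Fin k → Kˣ | ∏ i, z i ^ (mv i) = d} =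
        ⋃ y : Fin N, {z | ∀ i : Fin k, (i : ℕ) = 0 → fA (M y) z i = d' y} :=
  pre_fundamental_is_union_of_fundamental_general d mv hne hproper
end
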